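/- arXiv:1504.01255 — 5 statements merged into one kernel-verified Lean document; each statement's English description precedes it below -/
import Mathlib

section
/- Let 𝒳1, 𝒳2, ℋ be finite sets with a joint distribution P on 𝒳1 × 𝒳2 × ℋ such that X1 and X2 are conditionally independent given h ∈ ℋ, and suppose the matrix [P(X2|X1)] has rank |ℋ|. Let f1 : 𝒳1 → A be a function such that there exists g1 with P(X2=x2 | X1=x1) = g1(f1(x1), x2) for all (x1, x2). Then there exists a function t1 : A × ℋ → ℝ such that P(h | X1=x1) = t1(f1(x1), h) for all x1 ∈ 𝒳1 and h ∈ ℋ. -/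
open Finset

/-- If X1 and X2 are conditionally independent given h, the matrix
`[P(x2|x1)]` has rank `|ℋ|`, and `f1` is a tv-embedding of 𝒳1 w.r.t. 𝒳2
(i.e. `P(x2|x1) = g1 (f1 x1) x2`), then `P(h|x1)` factors through `f1`:
there is `t1` with `P(h|x1) = t1 (f1 x1) h`. -/
theorem stmt2 {X1 X2 H A : Type*} [Fintype X1] [Fintype X2] [Fintype H]
    (p : X1 → X2 → H → ℝ)
    (hnn : ∀ x1 x2 h, 0 ≤ p x1 x2 h)
    (hsum : ∑ x1, ∑ x2, ∑ h, p x1 x2 h = 1)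
    (hpos_X1 : ∀ x1, 0 < ∑ x2, ∑ h, p x1 x2 h)
    (hpos_H : ∀ h, 0 < ∑ x1, ∑ x2, p x1 x2 h)
    (hci : ∀ x1 x2 h,
      p x1 x2 h / (∑ x1', ∑ x2', p x1' x2' h)
        = ((∑ x2', p x1 x2' h) / (∑ x1', ∑ x2', p x1' x2' h))
          * ((∑ x1', p x1' x2 h) / (∑ x1', ∑ x2', p x1' x2' h)))
    (hrank : (Matrix.of fun (x2 : X2) (x1 : X1) =>
        (∑ h, p x1 x2 h) / (∑ x2', ∑ h, p x1 x2' h)).rank = Fintype.card H)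
    (f1 : X1 → A) (g1 : A → X2 → ℝ)
    (hf1 : ∀ x1 x2,
      (∑ h, p x1 x2 h) / (∑ x2', ∑ h, p x1 x2' h) = g1 (f1 x1) x2) :
    ∃ t1 : A → H → ℝ, ∀ x1 h,
      (∑ x2, p x1 x2 h) / (∑ x2', ∑ h', p x1 x2' h') = t1 (f1 x1) h := by
  classical
  set Ph : H → ℝ := fun h => ∑ x1, ∑ x2, p x1 x2 h with hPh
  set Px : X1 → ℝ := fun x1 => ∑ x2, ∑ h, p x1 x2 h with hPx
  set B : Matrix X2 H ℝ := Matrix.of fun x2 h => (∑ x1', p x1' x2 h) / Ph h with hBdef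
  set w : X1 → H → ℝ := fun x1 h => (∑ x2', p x1 x2' h) / Px x1 with hwdef
  have hPhne : ∀ h, Ph h ≠ 0 := fun h => (hpos_H h).ne'
  have hPxne : ∀ x1, Px x1 ≠ 0 := fun x1 => (hpos_X1 x1).ne'
  -- p factors: p x1 x2 h = a * b / Ph h
  have hfac : ∀ x1 x2 h,
      p x1 x2 h = (∑ x2', p x1 x2' h) * (∑ x1', p x1' x2 h) / Ph h := by
    intro x1 x2 h
    have h0 : (∑ x1', ∑ x2', p x1' x2' h) ≠ 0 := (hpos_H h).ne'
    have key := hci x1 x2 h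
    field_simp [h0] at key
    show p x1 x2 h = _ / (∑ x1', ∑ x2', p x1' x2' h)
    rw [eq_div_iff h0]
    nlinarith [key, hpos_H h]
  -- the matrix identity: g1 (f1 x1) x2 = (B.mulVec (w x1)) x2
  have hMBw : ∀ x1 x2, g1 (f1 x1) x2 = B.mulVec (w x1) x2 := by
    intro x1 x2
    rw [← hf1]
    have : (∑ h, p x1 x2 h) = ∑ h, B x2 h * ((∑ x2', p x1 x2' h)) := by
      refine Finset.sum_congr rfl fun h _ => ?_
      rw [hfac x1 x2 h]
      simp only [hBdef, Matrix.of_apply]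
      ring
    rw [Matrix.mulVec, dotProduct, this, Finset.sum_div]
    refine Finset.sum_congr rfl fun h _ => ?_
    simp only [hwdef]
    rw [mul_div_assoc]
  -- B has rank card H
  have hBrank : B.rank = Fintype.card H := by
    refine le_antisymm (Matrix.rank_le_card_width B) ?_
    rw [← hrank]
    have hfact : (Matrix.of fun (x2 : X2) (x1 : X1) =>
        (∑ h, p x1 x2 h) / (∑ x2', ∑ h, p x1 x2' h))
        = B * Matrix.of (fun (h : H) (x1 : X1) => w x1 h) := by
      ext x2 x1
      rw [Matrix.mul_apply]
      simp only [Matrix.of_apply]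
      rw [hf1, hMBw]
      rfl
    rw [hfact]
    exact Matrix.rank_mul_le_left B _
  -- hence mulVec is injective
  have hinj : Function.Injective B.mulVec := by
    have hker : LinearMap.ker B.mulVecLin = ⊥ := by
      have h1 := LinearMap.finrank_range_add_finrank_ker B.mulVecLin
      have h2 : Module.finrank ℝ (H → ℝ) = Fintype.card H := Module.finrank_pi ℝ
      have h3 : B.rank = Module.finrank ℝ (LinearMap.range B.mulVecLin) := rfl
      have h4 : Module.finrank ℝ (LinearMap.ker B.mulVecLin) = 0 := by omega
      exact Submodule.finrank_eq_zero.mp h4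
    intro u v huv
    have : B.mulVecLin u = B.mulVecLin v := by
      simpa [Matrix.mulVecLin_apply] using huv
    exact LinearMap.ker_eq_bot.mp hker this
  -- key: w factors through f1
  have hkey : ∀ a b : X1, f1 a = f1 b → w a = w b := by
    intro a b hab
    apply hinj
    funext x2
    rw [← hMBw, ← hMBw, hab]
  refine ⟨fun a h => if hx : ∃ x1, f1 x1 = a then w hx.choose h else 0,
    fun x1 h => ?_⟩
  have hx : ∃ y, f1 y = f1 x1 := ⟨x1, rfl⟩
  simp only [dif_pos hx]
  have := hkey hx.choose x1 hx.choose_spec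
  rw [this]
end

section
/- Under the assumptions that X1, X2, Y are pairwise conditionally independent given h ∈ ℋ (ℋ finite) and that the matrix [P(X1, X2)] has rank |ℋ|, if f1 is a tv-embedding of 𝒳1 w.r.t. 𝒳2, then there exists a function q1 such that P(Y=y | X1=x1) = q1(f1(x1), y) for all x1, y. -/
/-!
Conditional independence factors the joint law as `P(x1,x2,y,h) = P(x1,h) P(x2|h) P(y|h)`, so
`P(x1,x2) = ∑_h P(x1,h) P(x2|h)` and `P(x1,y) = ∑_h P(x1,h) P(y|h)`. The rank hypothesis forces
the `|ℋ| × |𝒳2|` matrix `[P(x2|h)]` to have full row rank, hence a right inverse. Applied to the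
tv-embedding identity `∑_h P(h|x1) P(x2|h) = g1 (f1 x1) x2` it shows that the posterior
`P(h|x1)` is a function of `f1 x1`, and therefore so is `P(y|x1) = ∑_h P(h|x1) P(y|h)`.
-/

open Finset

namespace Matrix

variable {m n K : Type*} [Fintype m] [Fintype n] [Field K]

theorem rank_eq_card_height_of_rank_mul {l : Type*} [Fintype l] {U : Matrix l m K}
    {V : Matrix m n K} (h : (U * V).rank = Fintype.card m) : V.rank = Fintype.card m :=
  le_antisymm V.rank_le_card_height (h ▸ rank_mul_le_right U V)

theorem exists_mul_eq_one_of_rank_eq_card_height [DecidableEq m] {V : Matrix m n K}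
    (h : V.rank = Fintype.card m) : ∃ R : Matrix n m K, V * R = 1 := by
  have hsurj : Function.Surjective V.mulVecLin := by
    rw [← LinearMap.range_eq_top]
    apply Submodule.eq_top_of_finrank_eq
    rw [Module.finrank_fintype_fun_eq_card, ← h, rank]
  choose col hcol using fun i => hsurj (Pi.single i 1)
  refine ⟨of fun j i => col i j, ?_⟩
  ext i i'
  simpa [mul_apply, one_apply, Pi.single_apply, mulVec, dotProduct, eq_comm] using
    congrFun (hcol i') i

theorem exists_row_eq_comp_of_row_mul_eq_comp {l A : Type*} {U : Matrix l m K}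
    {V : Matrix m n K} (hV : V.rank = Fintype.card m) (f : l → A) (g : A → n → K)
    (hUV : ∀ i, (U * V) i = g (f i)) : ∃ φ : A → m → K, ∀ i, U i = φ (f i) := by
  classical
  obtain ⟨R, hR⟩ := exists_mul_eq_one_of_rank_eq_card_height hV
  refine ⟨fun a => g a ᵥ* R, fun i => ?_⟩
  calc U i = (U * V * R) i := by rw [Matrix.mul_assoc, hR, Matrix.mul_one]
    _ = g (f i) ᵥ* R := by rw [mul_apply_eq_vecMul, hUV]

end Matrix

theorem sum_sum_eq_sum_of_eq_mul {β γ R : Type*} [Fintype β] [Fintype γ] [CommSemiring R]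
    {q : β → γ → R} {a : γ → R} {b : β → γ → R} (hq : ∀ y h, q y h = a h * b y h)
    (hb : ∀ h, ∑ y, b y h = 1) : ∑ y, ∑ h, q y h = ∑ h, a h := by
  rw [sum_comm]
  simp only [hq, ← mul_sum, hb, mul_one]

section LatentVariable

variable {X1 X2 Y H : Type*} [Fintype X1] [Fintype X2] [Fintype Y]
  (p : X1 → X2 → Y → H → ℝ)

noncomputable def marginalH (h : H) : ℝ := ∑ x1, ∑ x2, ∑ y, p x1 x2 y h

noncomputable def jointX1H (x1 : X1) (h : H) : ℝ := ∑ x2, ∑ y, p x1 x2 y h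

noncomputable def condX2 (x2 : X2) (h : H) : ℝ := (∑ x1, ∑ y, p x1 x2 y h) / marginalH p h

noncomputable def condY (y : Y) (h : H) : ℝ := (∑ x1, ∑ x2, p x1 x2 y h) / marginalH p h

variable {p} {h : H}

theorem sum_condX2 (hP : marginalH p h ≠ 0) : ∑ x2, condX2 p x2 h = 1 := by
  simp only [condX2]
  rw [← sum_div, div_eq_one_iff_eq hP, marginalH, sum_comm]

theorem sum_condY (hP : marginalH p h ≠ 0) : ∑ y, condY p y h = 1 := by
  simp only [condY]
  rw [← sum_div, div_eq_one_iff_eq hP, marginalH, sum_comm]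
  exact sum_congr rfl fun _ _ => sum_comm

theorem eq_jointX1H_mul_condX2_mul_condY (hP : marginalH p h ≠ 0) {x1 : X1} {x2 : X2} {y : Y}
    (hci : p x1 x2 y h / marginalH p h
      = jointX1H p x1 h / marginalH p h * condX2 p x2 h * condY p y h) :
    p x1 x2 y h = jointX1H p x1 h * condX2 p x2 h * condY p y h := by
  rw [div_eq_iff hP] at hci
  rw [hci]
  field_simp

end LatentVariable

theorem stmt3_general {X1 X2 Y H A : Type*} [Fintype X1] [Fintype X2] [Fintype Y] [Fintype H]
    (p : X1 → X2 → Y → H → ℝ)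
    (hpos_H : ∀ h, 0 < ∑ x1, ∑ x2, ∑ y, p x1 x2 y h)
    (hci : ∀ x1 x2 y h,
      p x1 x2 y h / (∑ x1', ∑ x2', ∑ y', p x1' x2' y' h)
        = ((∑ x2', ∑ y', p x1 x2' y' h) / (∑ x1', ∑ x2', ∑ y', p x1' x2' y' h))
          * ((∑ x1', ∑ y', p x1' x2 y' h) / (∑ x1', ∑ x2', ∑ y', p x1' x2' y' h))
          * ((∑ x1', ∑ x2', p x1' x2' y h) / (∑ x1', ∑ x2', ∑ y', p x1' x2' y' h)))
    (hrank : (Matrix.of fun (x1 : X1) (x2 : X2) =>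
        ∑ y, ∑ h, p x1 x2 y h).rank = Fintype.card H)
    (f1 : X1 → A) (g1 : A → X2 → ℝ)
    (hf1 : ∀ x1 x2,
      (∑ y, ∑ h, p x1 x2 y h) / (∑ x2', ∑ y, ∑ h, p x1 x2' y h)
        = g1 (f1 x1) x2) :
    ∃ q1 : A → Y → ℝ, ∀ x1 y,
      (∑ x2, ∑ h, p x1 x2 y h) / (∑ x2, ∑ y', ∑ h, p x1 x2 y' h)
        = q1 (f1 x1) y := by
  have hP (h : H) : marginalH p h ≠ 0 := (hpos_H h).ne'
  have hfac (x1 x2 y h) := eq_jointX1H_mul_condX2_mul_condY (hP h) (hci x1 x2 y h)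
  have hM (x1 x2) : ∑ y, ∑ h, p x1 x2 y h = ∑ h, jointX1H p x1 h * condX2 p x2 h :=
    sum_sum_eq_sum_of_eq_mul (fun y h => hfac x1 x2 y h) fun h => sum_condY (hP h)
  have hN (x1 y) : ∑ x2, ∑ h, p x1 x2 y h = ∑ h, jointX1H p x1 h * condY p y h :=
    sum_sum_eq_sum_of_eq_mul (fun x2 h => (hfac x1 x2 y h).trans (mul_right_comm _ _ _))
      fun h => sum_condX2 (hP h)
  set V : Matrix H X2 ℝ := .of fun h x2 => condX2 p x2 h
  have hUV : (Matrix.of fun x1 x2 => ∑ y, ∑ h, p x1 x2 y h) = .of (jointX1H p) * V := by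
    ext x1 x2
    exact hM x1 x2
  obtain ⟨φ, hφ⟩ := Matrix.exists_row_eq_comp_of_row_mul_eq_comp
    (Matrix.rank_eq_card_height_of_rank_mul (hUV ▸ hrank)) f1 g1
    (U := .of fun x1 h => jointX1H p x1 h / ∑ x2, ∑ y, ∑ h, p x1 x2 y h) fun x1 => by
      ext x2
      rw [← hf1, hM, sum_div]
      simp only [Matrix.mul_apply, Matrix.of_apply, V, div_mul_eq_mul_div]
  refine ⟨fun a y => ∑ h, φ a h * condY p y h, fun x1 y => ?_⟩
  rw [hN, sum_div]
  simp only [← congrFun (hφ x1), Matrix.of_apply, div_mul_eq_mul_div]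

/-- If X1, X2, Y are conditionally independent given h, the matrix
`[P(x1,x2)]` has rank `|ℋ|`, and `f1` is a tv-embedding of 𝒳1 w.r.t. 𝒳2, then
there exists `q1` with `P(y|x1) = q1 (f1 x1) y`. -/
theorem stmt3 {X1 X2 Y H A : Type*} [Fintype X1] [Fintype X2] [Fintype Y] [Fintype H]
    (p : X1 → X2 → Y → H → ℝ)
    (hnn : ∀ x1 x2 y h, 0 ≤ p x1 x2 y h)
    (hsum : ∑ x1, ∑ x2, ∑ y, ∑ h, p x1 x2 y h = 1)
    (hpos_X1 : ∀ x1, 0 < ∑ x2, ∑ y, ∑ h, p x1 x2 y h)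
    (hpos_H : ∀ h, 0 < ∑ x1, ∑ x2, ∑ y, p x1 x2 y h)
    (hci : ∀ x1 x2 y h,
      p x1 x2 y h / (∑ x1', ∑ x2', ∑ y', p x1' x2' y' h)
        = ((∑ x2', ∑ y', p x1 x2' y' h) / (∑ x1', ∑ x2', ∑ y', p x1' x2' y' h))
          * ((∑ x1', ∑ y', p x1' x2 y' h) / (∑ x1', ∑ x2', ∑ y', p x1' x2' y' h))
          * ((∑ x1', ∑ x2', p x1' x2' y h) / (∑ x1', ∑ x2', ∑ y', p x1' x2' y' h)))
    (hrank : (Matrix.of fun (x1 : X1) (x2 : X2) =>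
        ∑ y, ∑ h, p x1 x2 y h).rank = Fintype.card H)
    (f1 : X1 → A) (g1 : A → X2 → ℝ)
    (hf1 : ∀ x1 x2,
      (∑ y, ∑ h, p x1 x2 y h) / (∑ x2', ∑ y, ∑ h, p x1 x2' y h)
        = g1 (f1 x1) x2) :
    ∃ q1 : A → Y → ℝ, ∀ x1 y,
      (∑ x2, ∑ h, p x1 x2 y h) / (∑ x2, ∑ y', ∑ h, p x1 x2 y' h)
        = q1 (f1 x1) y :=
  stmt3_general p hpos_H hci hrank f1 g1 hf1
end

section
/- Under the assumptions that X1, X2, Y are conditionally independent given h ∈ ℋ (ℋ finite) and that [P(X1, X2)] has rank |ℋ|, if f1 is a tv-embedding of 𝒳1 w.r.t. 𝒳2 and f2 is a tv-embedding of 𝒳2 w.r.t. 𝒳1, then there exists a function q such that P(Y=y | X1=x1, X2=x2) = q(f1(x1), f2(x2), y) for all x1, x2, y. -/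
/-!
Conditional independence makes the joint law a product `p x1 x2 y h = A x1 h * B x2 h * C y h`,
with `A x1 h = P(x1 | h)`, `B x2 h = P(x2, h)` and `C y h = P(y | h)`, so that
`[P(x1, x2)] = A * Bᵀ`. The rank condition forces `A` and `B` to have full column rank `|ℋ|`.
If `f1 x1 = f1 x1'`, the tv-embedding property makes the rows `x1`, `x1'` of `[P(x1, x2)]`
proportional, and since `B` has trivial kernel the rows `A x1`, `A x1'` are proportional with
the same factor; likewise on the `X2` side. Proportional rows of `A` and `B` rescale
`P(y, x1, x2)` by a common nonzero factor, which cancels in `P(y | x1, x2)`.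
-/

open Finset Matrix

theorem Matrix.mulVec_injective_of_rank_eq_card {m n K : Type*} [Fintype n] [Field K]
    {B : Matrix m n K} (h : B.rank = Fintype.card n) : Function.Injective B.mulVec := by
  change Function.Injective B.mulVecLin
  rw [← LinearMap.ker_eq_bot, ← Submodule.finrank_eq_zero]
  have := LinearMap.finrank_range_add_finrank_ker B.mulVecLin
  rw [Module.finrank_fintype_fun_eq_card] at this
  change B.rank + _ = _ at this
  omega

theorem Matrix.rank_eq_card_of_rank_mul_eq_card {m n k K : Type*} [Fintype n] [Fintype k]
    [Field K] {A : Matrix m k K} {B : Matrix k n K} (h : (A * B).rank = Fintype.card k) :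
    A.rank = Fintype.card k ∧ B.rank = Fintype.card k :=
  ⟨le_antisymm A.rank_le_card_width (h ▸ A.rank_mul_le_left B),
    le_antisymm B.rank_le_card_height (h ▸ A.rank_mul_le_right B)⟩

theorem Matrix.row_eq_smul_of_mul_transpose_row_eq_smul {m n k K : Type*} [Fintype k]
    [CommSemiring K] {A : Matrix m k K} {B : Matrix n k K} (hB : Function.Injective B.mulVec)
    {i i' : m} {c : K} (h : (A * Bᵀ) i' = c • (A * Bᵀ) i) : A i' = c • A i := by
  apply hB
  rwa [mulVec_smul, ← vecMul_transpose, ← vecMul_transpose]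

theorem eq_smul_of_div_sum_eq_div_sum {ι K : Type*} [Fintype ι] [Field K] {u v : ι → K}
    (hu : ∑ j, u j ≠ 0) (hv : ∑ j, v j ≠ 0) (h : ∀ j, u j / ∑ j', u j' = v j / ∑ j', v j') :
    v = ((∑ j, v j) / ∑ j, u j) • u := by
  funext j
  have := h j
  simp only [Pi.smul_apply, smul_eq_mul]
  field_simp at this ⊢
  linear_combination -this

theorem Matrix.exists_row_eq_smul_of_div_row_sum_eq_comp {m n k K α : Type*} [Fintype n] [Fintype k]
    [Field K] {M : Matrix m n K} {A : Matrix m k K} {B : Matrix n k K} (hM : M = A * Bᵀ)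
    (hB : B.rank = Fintype.card k) (hM0 : ∀ i, ∑ j, M i j ≠ 0) {f : m → α}
    {g : α → n → K} (hf : ∀ i j, M i j / ∑ j', M i j' = g (f i) j) {i i' : m} (hi : f i = f i') :
    ∃ c : K, c ≠ 0 ∧ A i' = c • A i := by
  refine ⟨(∑ j, M i' j) / ∑ j, M i j, div_ne_zero (hM0 i') (hM0 i), ?_⟩
  refine row_eq_smul_of_mul_transpose_row_eq_smul (mulVec_injective_of_rank_eq_card hB) ?_
  rw [← hM]
  exact eq_smul_of_div_sum_eq_div_sum (hM0 i) (hM0 i') fun j =>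
    (hf i j).trans (hi ▸ hf i' j).symm

theorem exists_factorization_of_condIndep {X1 X2 Y H K : Type*} [Fintype X1] [Fintype X2]
    [Fintype Y] [Field K] (p : X1 → X2 → Y → H → K)
    (hH : ∀ h, ∑ x1, ∑ x2, ∑ y, p x1 x2 y h ≠ 0)
    (hci : ∀ x1 x2 y h,
      p x1 x2 y h / (∑ x1', ∑ x2', ∑ y', p x1' x2' y' h)
        = ((∑ x2', ∑ y', p x1 x2' y' h) / (∑ x1', ∑ x2', ∑ y', p x1' x2' y' h))
          * ((∑ x1', ∑ y', p x1' x2 y' h) / (∑ x1', ∑ x2', ∑ y', p x1' x2' y' h))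
          * ((∑ x1', ∑ x2', p x1' x2' y h) / (∑ x1', ∑ x2', ∑ y', p x1' x2' y' h))) :
    ∃ (A : Matrix X1 H K) (B : Matrix X2 H K) (C : Y → H → K),
      (∀ x1 x2 y h, p x1 x2 y h = A x1 h * B x2 h * C y h) ∧ ∀ h, ∑ y, C y h = 1 := by
  refine ⟨.of fun x1 h => (∑ x2, ∑ y, p x1 x2 y h) / ∑ x1, ∑ x2, ∑ y, p x1 x2 y h,
    .of fun x2 h => ∑ x1, ∑ y, p x1 x2 y h,
    fun y h => (∑ x1, ∑ x2, p x1 x2 y h) / ∑ x1, ∑ x2, ∑ y, p x1 x2 y h,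
    fun x1 x2 y h => ?_, fun h => ?_⟩
  · rw [← div_left_inj' (hH h), hci, of_apply, of_apply]
    field_simp
  · rw [← sum_div, div_eq_one_iff_eq (hH h), sum_comm]
    exact sum_congr rfl fun _ _ => sum_comm

theorem of_sum_sum_eq_mul_transpose {X1 X2 Y H K : Type*} [Fintype Y] [Fintype H]
    [CommSemiring K] {p : X1 → X2 → Y → H → K}
    {A : Matrix X1 H K} {B : Matrix X2 H K} {C : Y → H → K}
    (hp : ∀ x1 x2 y h, p x1 x2 y h = A x1 h * B x2 h * C y h) (hC : ∀ h, ∑ y, C y h = 1) :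
    Matrix.of (fun x1 x2 => ∑ y, ∑ h, p x1 x2 y h) = A * Bᵀ := by
  ext x1 x2
  simp only [of_apply, mul_apply, transpose_apply, hp]
  rw [sum_comm]
  exact sum_congr rfl fun h _ => by rw [← mul_sum, hC, mul_one]

theorem div_sum_eq_of_rows_eq_smul {X1 X2 Y H K : Type*} [Fintype Y] [Fintype H] [Field K]
    {p : X1 → X2 → Y → H → K} {A : Matrix X1 H K} {B : Matrix X2 H K} {C : Y → H → K}
    (hp : ∀ x1 x2 y h, p x1 x2 y h = A x1 h * B x2 h * C y h) {x1 x1' : X1} {x2 x2' : X2}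
    {a b : K} (ha : a ≠ 0) (hb : b ≠ 0) (hA : A x1' = a • A x1) (hB : B x2' = b • B x2) (y : Y) :
    (∑ h, p x1' x2' y h) / (∑ y', ∑ h, p x1' x2' y' h)
      = (∑ h, p x1 x2 y h) / (∑ y', ∑ h, p x1 x2 y' h) := by
  have hscale : ∀ y h, p x1' x2' y h = (a * b) * p x1 x2 y h := fun y h => by
    rw [hp, hp, hA, hB, Pi.smul_apply, Pi.smul_apply, smul_eq_mul, smul_eq_mul]
    ring
  simp_rw [hscale, ← mul_sum]
  exact mul_div_mul_left _ _ (mul_ne_zero ha hb)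

theorem stmt4_general {X1 X2 Y H A1 A2 : Type*}
    [Fintype X1] [Fintype X2] [Fintype Y] [Fintype H]
    (p : X1 → X2 → Y → H → ℝ)
    (hpos_X1 : ∀ x1, 0 < ∑ x2, ∑ y, ∑ h, p x1 x2 y h)
    (hpos_X2 : ∀ x2, 0 < ∑ x1, ∑ y, ∑ h, p x1 x2 y h)
    (hpos_H : ∀ h, 0 < ∑ x1, ∑ x2, ∑ y, p x1 x2 y h)
    (hci : ∀ x1 x2 y h,
      p x1 x2 y h / (∑ x1', ∑ x2', ∑ y', p x1' x2' y' h)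
        = ((∑ x2', ∑ y', p x1 x2' y' h) / (∑ x1', ∑ x2', ∑ y', p x1' x2' y' h))
          * ((∑ x1', ∑ y', p x1' x2 y' h) / (∑ x1', ∑ x2', ∑ y', p x1' x2' y' h))
          * ((∑ x1', ∑ x2', p x1' x2' y h) / (∑ x1', ∑ x2', ∑ y', p x1' x2' y' h)))
    (hrank : (Matrix.of fun (x1 : X1) (x2 : X2) =>
        ∑ y, ∑ h, p x1 x2 y h).rank = Fintype.card H)
    (f1 : X1 → A1) (g1 : A1 → X2 → ℝ)
    (hf1 : ∀ x1 x2,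
      (∑ y, ∑ h, p x1 x2 y h) / (∑ x2', ∑ y, ∑ h, p x1 x2' y h)
        = g1 (f1 x1) x2)
    (f2 : X2 → A2) (g2 : A2 → X1 → ℝ)
    (hf2 : ∀ x1 x2,
      (∑ y, ∑ h, p x1 x2 y h) / (∑ x1', ∑ y, ∑ h, p x1' x2 y h)
        = g2 (f2 x2) x1) :
    ∃ q : A1 → A2 → Y → ℝ, ∀ x1 x2 y,
      (∑ h, p x1 x2 y h) / (∑ y', ∑ h, p x1 x2 y' h)
        = q (f1 x1) (f2 x2) y := by
  obtain ⟨A, B, C, hp, hC⟩ := exists_factorization_of_condIndep p (fun h => (hpos_H h).ne') hci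
  have hM := of_sum_sum_eq_mul_transpose hp hC
  have hMt : (Matrix.of fun x1 x2 => ∑ y, ∑ h, p x1 x2 y h)ᵀ = B * Aᵀ := by
    rw [hM, transpose_mul, transpose_transpose]
  obtain ⟨hA, hBt⟩ := rank_eq_card_of_rank_mul_eq_card (hM ▸ hrank)
  have hcond : (fun x : X1 × X2 => fun y =>
      (∑ h, p x.1 x.2 y h) / (∑ y', ∑ h, p x.1 x.2 y' h)).FactorsThrough (Prod.map f1 f2) := by
    rintro ⟨x1, x2⟩ ⟨x1', x2'⟩ hf
    obtain ⟨a, ha, hAa⟩ := exists_row_eq_smul_of_div_row_sum_eq_comp hM (rank_transpose B ▸ hBt)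
      (fun x1 => (hpos_X1 x1).ne') hf1 (Prod.ext_iff.1 hf).1
    obtain ⟨b, hb, hBb⟩ := exists_row_eq_smul_of_div_row_sum_eq_comp hMt hA
      (fun x2 => (hpos_X2 x2).ne') (fun x2 x1 => hf2 x1 x2) (Prod.ext_iff.1 hf).2
    exact funext fun y => (div_sum_eq_of_rows_eq_smul hp ha hb hAa hBb y).symm
  exact ⟨fun a1 a2 => Function.extend (Prod.map f1 f2) _ 0 (a1, a2),
    fun x1 x2 y => congrFun (hcond.extend_apply 0 (x1, x2)).symm y⟩

/-- Under conditional independence of X1, X2, Y given h and the rank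
condition on `[P(x1,x2)]`, if `f1` is a tv-embedding of 𝒳1 w.r.t. 𝒳2 and `f2` is a
tv-embedding of 𝒳2 w.r.t. 𝒳1, then there is `q` with
`P(y|x1,x2) = q (f1 x1) (f2 x2) y`. -/
theorem stmt4 {X1 X2 Y H A1 A2 : Type*}
    [Fintype X1] [Fintype X2] [Fintype Y] [Fintype H]
    (p : X1 → X2 → Y → H → ℝ)
    (hnn : ∀ x1 x2 y h, 0 ≤ p x1 x2 y h)
    (hsum : ∑ x1, ∑ x2, ∑ y, ∑ h, p x1 x2 y h = 1)
    (hpos_X1 : ∀ x1, 0 < ∑ x2, ∑ y, ∑ h, p x1 x2 y h)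
    (hpos_X2 : ∀ x2, 0 < ∑ x1, ∑ y, ∑ h, p x1 x2 y h)
    (hpos_X1X2 : ∀ x1 x2, 0 < ∑ y, ∑ h, p x1 x2 y h)
    (hpos_H : ∀ h, 0 < ∑ x1, ∑ x2, ∑ y, p x1 x2 y h)
    (hci : ∀ x1 x2 y h,
      p x1 x2 y h / (∑ x1', ∑ x2', ∑ y', p x1' x2' y' h)
        = ((∑ x2', ∑ y', p x1 x2' y' h) / (∑ x1', ∑ x2', ∑ y', p x1' x2' y' h))
          * ((∑ x1', ∑ y', p x1' x2 y' h) / (∑ x1', ∑ x2', ∑ y', p x1' x2' y' h))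
          * ((∑ x1', ∑ x2', p x1' x2' y h) / (∑ x1', ∑ x2', ∑ y', p x1' x2' y' h)))
    (hrank : (Matrix.of fun (x1 : X1) (x2 : X2) =>
        ∑ y, ∑ h, p x1 x2 y h).rank = Fintype.card H)
    (f1 : X1 → A1) (g1 : A1 → X2 → ℝ)
    (hf1 : ∀ x1 x2,
      (∑ y, ∑ h, p x1 x2 y h) / (∑ x2', ∑ y, ∑ h, p x1 x2' y h)
        = g1 (f1 x1) x2)
    (f2 : X2 → A2) (g2 : A2 → X1 → ℝ)
    (hf2 : ∀ x1 x2,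
      (∑ y, ∑ h, p x1 x2 y h) / (∑ x1', ∑ y, ∑ h, p x1' x2 y h)
        = g2 (f2 x2) x1) :
    ∃ q : A1 → A2 → Y → ℝ, ∀ x1 x2 y,
      (∑ h, p x1 x2 y h) / (∑ y', ∑ h, p x1 x2 y' h)
        = q (f1 x1) (f2 x2) y :=
  stmt4_general p hpos_X1 hpos_X2 hpos_H hci hrank f1 g1 hf1 f2 g2 hf2
end

section
/- (Universal approximation by ReLU region embedding) Let ℛ ⊂ {0,1}^d be a finite set of binary vectors, each with at most m ones. For any function f : ℛ → ℝ, there exist a matrix W ∈ ℝ^{n×d}, vectors b ∈ ℝ^n and v ∈ ℝ^n (with n = |ℛ|) such that f(x) = vᵀ·max(0, Wx + b) for all x ∈ ℛ, where max is taken componentwise. -/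
open Finset

/-- Universal approximation by ReLU region embedding: for any finite
set `R` of binary vectors in `{0,1}^d` (each with at most `m` ones) and any
real-valued `f`, there are `W, b, v` with `n = |R|` rows/components such that
`f x = vᵀ · max(0, W x + b)` on `R`. -/
theorem stmt7 {d : ℕ} (m : ℕ) (R : Finset (Fin d → ℝ))
    (hbin : ∀ x ∈ R, ∀ j, x j = 0 ∨ x j = 1)
    (hones : ∀ x ∈ R, ({j | x j = 1} : Set (Fin d)).ncard ≤ m)
    (f : (Fin d → ℝ) → ℝ) :
    ∃ (W : Matrix (Fin R.card) (Fin d) ℝ) (b v : Fin R.card → ℝ),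
      ∀ x ∈ R, f x = ∑ i, v i * max 0 ((∑ j, W i j * x j) + b i) := by
  classical
  set e := R.equivFin with he
  set g : Fin R.card → (Fin d → ℝ) := fun i => (e.symm i : Fin d → ℝ) with hg
  have hgR : ∀ i, g i ∈ R := fun i => (e.symm i).2
  refine ⟨fun i j => 2 * g i j - 1, fun i => 1 - ∑ j, g i j, fun i => f (g i), ?_⟩
  intro x hx
  have key : ∀ i, (∑ j, (2 * g i j - 1) * x j) + (1 - ∑ j, g i j)
      = 1 - ∑ j, |x j - g i j| := by
    intro i
    have h1 : ∀ j ∈ Finset.univ, (2 * g i j - 1) * x j - g i j = -|x j - g i j| := by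
      intro j _
      rcases hbin x hx j with h | h <;> rcases hbin (g i) (hgR i) j with h' | h' <;>
        simp [h, h'] <;> norm_num
    calc (∑ j, (2 * g i j - 1) * x j) + (1 - ∑ j, g i j)
        = 1 + ∑ j, ((2 * g i j - 1) * x j - g i j) := by
          rw [Finset.sum_sub_distrib]; ring
      _ = 1 + ∑ j, -|x j - g i j| := by rw [Finset.sum_congr rfl h1]
      _ = 1 - ∑ j, |x j - g i j| := by rw [Finset.sum_neg_distrib]; ring
  set i₀ := e ⟨x, hx⟩ with hi₀
  have hgi₀ : g i₀ = x := by simp [hg, hi₀]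
  have relu : ∀ i, max 0 ((∑ j, (2 * g i j - 1) * x j) + (1 - ∑ j, g i j))
      = if i = i₀ then 1 else 0 := by
    intro i
    rw [key i]
    by_cases hcase : i = i₀
    · subst hcase
      simp [hgi₀]
    · simp only [hcase, if_false]
      have hne : g i ≠ x := by
        intro hcontra
        apply hcase
        have : e.symm i = (⟨x, hx⟩ : R) := Subtype.ext hcontra
        rw [← e.apply_symm_apply i, this, hi₀]
      obtain ⟨j₀, hj₀⟩ : ∃ j, x j ≠ g i j := by
        by_contra hcon
        push_neg at hcon
        exact hne (funext fun j => (hcon j).symm)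
      have hterm : |x j₀ - g i j₀| = 1 := by
        rcases hbin x hx j₀ with h | h <;> rcases hbin (g i) (hgR i) j₀ with h' | h' <;>
          simp [h, h'] at hj₀ ⊢
      have hsum : (1 : ℝ) ≤ ∑ j, |x j - g i j| := by
        calc (1:ℝ) = |x j₀ - g i j₀| := hterm.symm
          _ ≤ ∑ j, |x j - g i j| :=
            Finset.single_le_sum (f := fun j => |x j - g i j|)
              (fun j _ => abs_nonneg _) (Finset.mem_univ j₀)
      exact max_eq_left (by linarith)
  calc f x = ∑ i, f (g i) * (if i = i₀ then (1:ℝ) else 0) := by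
        simp [mul_ite, Finset.sum_ite_eq' Finset.univ i₀, hgi₀]
    _ = ∑ i, f (g i) * max 0 ((∑ j, (2 * g i j - 1) * x j) + (1 - ∑ j, g i j)) := by
        refine Finset.sum_congr rfl fun i _ => ?_
        rw [relu i]
end

section
/- (Low-dimensional embedding of unions of simple concepts) If C ⊆ V^m is a union of q simple concepts C_1, …, C_q, then there exist W ∈ ℝ^{q×m|V|}, b ∈ ℝ^q, and v = (1,…,1) ∈ ℝ^q such that, with f(x) = vᵀ·max(0, Wx + b) on the one-hot seq-representation, one has x ∈ C if and only if f(x) > 0. -/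
open Finset
open scoped Classical

/-- low-dimensional embedding of unions of simple concepts: if `C`
is the union of `q` simple concepts, there exist `W ∈ ℝ^{q×m|V|}` and `b ∈ ℝ^q`
such that with `v = (1,…,1)` and `f(x) = vᵀ·max(0, Wx + b)` on the one-hot
seq-representation, `x ∈ C ↔ f(x) > 0`. -/
theorem stmt10 {V : Type*} [Fintype V] [DecidableEq V] (m q : ℕ)
    (Vi : Fin q → Fin m → Finset V) (s : Fin q → Fin m → ℝ)
    (hs : ∀ i j, s i j = 1 ∨ s i j = -1) :
    ∃ (W : Fin q → Fin m × V → ℝ) (b : Fin q → ℝ),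
      ∀ x : Fin m → V,
        ((∃ i, ∀ j, if s i j = 1 then x j ∈ Vi i j else x j ∉ Vi i j)
          ↔ 0 < ∑ i, (1 : ℝ)
              * max 0 ((∑ r : Fin m × V, W i r * (if x r.1 = r.2 then 1 else 0)) + b i)) := by
  set P : Fin q → Fin m → V → Prop :=
    fun i j w => if s i j = 1 then w ∈ Vi i j else w ∉ Vi i j with hP
  refine ⟨fun i r => if P i r.1 r.2 then 1 else 0, fun _ => 1 - m, fun x => ?_⟩
  have hsum : ∀ i : Fin q,
      (∑ r : Fin m × V, (if P i r.1 r.2 then (1:ℝ) else 0)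
          * (if x r.1 = r.2 then 1 else 0))
        = ((univ.filter (fun j => P i j (x j))).card : ℝ) := by
    intro i
    rw [Fintype.sum_prod_type]
    have : ∀ j : Fin m,
        (∑ w : V, (if P i j w then (1:ℝ) else 0) * (if x j = w then 1 else 0))
          = (if P i j (x j) then (1:ℝ) else 0) := by
      intro j
      have h1 : ∀ w : V,
          (if P i j w then (1:ℝ) else 0) * (if x j = w then 1 else 0)
            = if x j = w then (if P i j w then (1:ℝ) else 0) else 0 := by
        intro w
        by_cases h : x j = w <;> simp [h]
      rw [Finset.sum_congr rfl fun w _ => h1 w]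
      simp [Finset.sum_ite_eq]
    rw [Finset.sum_congr rfl fun j _ => this j]
    rw [Finset.sum_boole]
  constructor
  · rintro ⟨i, hi⟩
    have hcard : (univ.filter (fun j => P i j (x j))).card = m := by
      have : univ.filter (fun j => P i j (x j)) = (univ : Finset (Fin m)) := by
        apply Finset.filter_true_of_mem
        intro j _
        exact hi j
      rw [this, Finset.card_univ, Fintype.card_fin]
    apply Finset.sum_pos'
    · intro i' _
      have := le_max_left (0:ℝ) ((∑ r : Fin m × V,
        (if P i' r.1 r.2 then (1:ℝ) else 0) * (if x r.1 = r.2 then 1 else 0)) + (1 - m))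
      linarith [this]
    · refine ⟨i, Finset.mem_univ i, ?_⟩
      rw [hsum i, hcard]
      have : (0:ℝ) < (m:ℝ) + (1 - m) := by ring_nf; norm_num
      have hm : max 0 ((m:ℝ) + (1 - m)) = (m:ℝ) + (1 - m) := max_eq_right (le_of_lt this)
      rw [hm]
      linarith
  · intro hpos
    by_contra hne
    push_neg at hne
    have hzero : ∀ i ∈ (univ : Finset (Fin q)), (1:ℝ)
        * max 0 ((∑ r : Fin m × V, (if P i r.1 r.2 then (1:ℝ) else 0)
            * (if x r.1 = r.2 then 1 else 0)) + (1 - m)) = 0 := by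
      intro i _
      obtain ⟨j, hj⟩ := hne i
      have hlt : (univ.filter (fun j => P i j (x j))).card < m := by
        have hss : univ.filter (fun j => P i j (x j)) ⊂ univ := by
          refine Finset.ssubset_iff_of_subset (Finset.filter_subset _ _) |>.mpr ?_
          exact ⟨j, Finset.mem_univ j, fun h => hj ((Finset.mem_filter.mp h).2)⟩
        have := Finset.card_lt_card hss
        simpa using this
      rw [hsum i]
      have hle : ((univ.filter (fun j => P i j (x j))).card : ℝ) + (1 - m) ≤ 0 := by
        have : ((univ.filter (fun j => P i j (x j))).card : ℝ) + 1 ≤ (m : ℝ) := by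
          exact_mod_cast Nat.succ_le_of_lt hlt
        linarith
      rw [max_eq_left hle, mul_zero]
    rw [Finset.sum_congr rfl hzero] at hpos
    simp at hpos
end
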